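/- arXiv:2510.22088 — 9 statements merged into one kernel-verified Lean document; each statement's English description precedes it below -/
import Mathlib

section
/- Let f: ℝ → ℝ be C-quasi-self-concordant and A ∈ ℝ^{n×d}. Define h(x) = Σᵢ f((Ax)ᵢ). Then for any x, y ∈ ℝ^d with ‖Ax − Ay‖_∞ ≤ r, the Hessians satisfy (1/e^{Cr})·∇²h(x) ⪯ ∇²h(y) ⪯ e^{Cr}·∇²h(x) in the Loewner order. -/
/-!
Along the segment from `(Ax)ᵢ` to `(Ay)ᵢ` the second derivative `g = f''` satisfies
`|g'| ≤ C g`, so Grönwall's inequality gives `g((Ay)ᵢ) ≤ e^{Cr} g((Ax)ᵢ)` and conversely.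
The Hessians are `Aᵀ diag(g(Ax)) A` and `Aᵀ diag(g(Ay)) A`, and `v ↦ Aᵀ diag(v) A` maps
entrywise nonnegative vectors to positive semidefinite matrices.
-/

open Matrix Real

lemma le_mul_exp_of_deriv_le {g g' : ℝ → ℝ} {C s t : ℝ} (hg : ∀ u, HasDerivAt g (g' u) u)
    (hd : ∀ u, g' u ≤ C * g u) (hst : s ≤ t) :
    g t ≤ g s * exp (C * (t - s)) := by
  have h := le_gronwallBound_of_liminf_deriv_right_le (δ := g s) (ε := 0)
    (fun u _ => (hg u).continuousAt.continuousWithinAt)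
    (fun u _ _ hr => (hg u).hasDerivWithinAt.liminf_right_slope_le hr) le_rfl
    (fun u _ => by simpa using hd u) t ⟨hst, le_rfl⟩
  rwa [gronwallBound_ε0] at h

lemma le_mul_exp_abs_sub_of_abs_deriv_le {g g' : ℝ → ℝ} {C : ℝ}
    (hg : ∀ u, HasDerivAt g (g' u) u) (hd : ∀ u, |g' u| ≤ C * g u) (s t : ℝ) :
    g t ≤ g s * exp (C * |t - s|) := by
  rcases le_total s t with hst | hts
  · rw [abs_of_nonneg (sub_nonneg.2 hst)]
    exact le_mul_exp_of_deriv_le hg (fun u => (le_abs_self _).trans (hd u)) hst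
  · have hreflect : ∀ u, HasDerivAt (fun u => g (-u)) (-g' (-u)) u := fun u => by
      have h := (hg (-u)).comp u (hasDerivAt_neg u)
      rwa [mul_neg_one] at h
    have h := le_mul_exp_of_deriv_le hreflect (fun u => (neg_le_abs _).trans (hd (-u)))
      (neg_le_neg hts)
    rw [abs_of_nonpos (sub_nonpos.2 hts)]
    simpa [neg_add_eq_sub] using h

lemma le_mul_exp_of_abs_deriv_le {g g' : ℝ → ℝ} {C r s t : ℝ} (hC : 0 ≤ C)
    (hg : ∀ u, HasDerivAt g (g' u) u) (hd : ∀ u, |g' u| ≤ C * g u) (hst : |t - s| ≤ r) :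
    g t ≤ g s * exp (C * r) := by
  have h := le_mul_exp_abs_sub_of_abs_deriv_le hg hd s t
  rcases hC.eq_or_lt with rfl | hCpos
  · simpa using h
  · have hgs : 0 ≤ g s := nonneg_of_mul_nonneg_right ((abs_nonneg _).trans (hd s)) hCpos
    exact h.trans (mul_le_mul_of_nonneg_left (exp_le_exp.2 (by gcongr)) hgs)

namespace Matrix

variable {m n R : Type*} [Fintype m] [DecidableEq m]

lemma smul_transpose_mul_diagonal_mul [CommSemiring R] (c : R) (A : Matrix m n R) (v : m → R) :
    c • (Aᵀ * diagonal v * A) = Aᵀ * diagonal (c • v) * A := by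
  rw [diagonal_smul, Matrix.mul_smul, Matrix.smul_mul]

lemma posSemidef_transpose_mul_diagonal_mul_sub [Fintype n] [CommRing R] [PartialOrder R]
    [StarRing R] [TrivialStar R] [StarOrderedRing R] (A : Matrix m n R) {v w : m → R} (hvw : v ≤ w) :
    (Aᵀ * diagonal w * A - Aᵀ * diagonal v * A).PosSemidef := by
  rw [← Matrix.sub_mul, ← Matrix.mul_sub, diagonal_sub, ← conjTranspose_eq_transpose_of_trivial]
  exact (posSemidef_diagonal_iff.2 fun i => sub_nonneg.2 (hvw i)).conjTranspose_mul_mul_same A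

end Matrix

theorem qsc_hessian_stability_general {n d : ℕ} (C r : ℝ) (hC : 0 ≤ C)
    (f : ℝ → ℝ) (hf : ContDiff ℝ 3 f)
    (hqsc : ∀ t : ℝ, |iteratedDeriv 3 f t| ≤ C * iteratedDeriv 2 f t)
    (A : Matrix (Fin n) (Fin d) ℝ) (x y : Fin d → ℝ)
    (hxy : ‖A.mulVec x - A.mulVec y‖ ≤ r)
    (H : (Fin d → ℝ) → Matrix (Fin d) (Fin d) ℝ)
    (hH : ∀ z, H z = Aᵀ * Matrix.diagonal (fun i => iteratedDeriv 2 f (A.mulVec z i)) * A) :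
    (H y - (Real.exp (C * r))⁻¹ • H x).PosSemidef ∧
    (Real.exp (C * r) • H x - H y).PosSemidef := by
  have hderiv : ∀ u, HasDerivAt (iteratedDeriv 2 f) (iteratedDeriv 3 f u) u := fun u => by
    rw [show iteratedDeriv 3 f = deriv (iteratedDeriv 2 f) from iteratedDeriv_succ]
    exact (hf.differentiable_iteratedDeriv 2 (by norm_num) u).hasDerivAt
  have hcoord : ∀ i, |A.mulVec x i - A.mulVec y i| ≤ r := fun i =>
    (norm_le_pi_norm (A.mulVec x - A.mulVec y) i).trans hxy
  have hexp : 0 < exp (C * r) := exp_pos _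
  rw [hH x, hH y, smul_transpose_mul_diagonal_mul, smul_transpose_mul_diagonal_mul]
  constructor
  · refine posSemidef_transpose_mul_diagonal_mul_sub A fun i => ?_
    rw [Pi.smul_apply, smul_eq_mul, inv_mul_le_iff₀ hexp, mul_comm]
    exact le_mul_exp_of_abs_deriv_le hC hderiv hqsc (hcoord i)
  · refine posSemidef_transpose_mul_diagonal_mul_sub A fun i => ?_
    rw [Pi.smul_apply, smul_eq_mul, mul_comm]
    exact le_mul_exp_of_abs_deriv_le hC hderiv hqsc (by rw [abs_sub_comm]; exact hcoord i)

/-- Hessian stability in the ℓ∞ norm for `h x = ∑ i, f ((A x)_i)` with `f` C-QSC: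
if `‖Ax - Ay‖_∞ ≤ r` then `e^{-Cr} ∇²h(x) ⪯ ∇²h(y) ⪯ e^{Cr} ∇²h(x)`. -/
theorem qsc_hessian_stability {n d : ℕ} (C r : ℝ) (hC : 0 ≤ C) (hr : 0 ≤ r)
    (f : ℝ → ℝ) (hf : ContDiff ℝ 3 f) (hconv : ConvexOn ℝ Set.univ f)
    (hqsc : ∀ t : ℝ, |iteratedDeriv 3 f t| ≤ C * iteratedDeriv 2 f t)
    (A : Matrix (Fin n) (Fin d) ℝ) (x y : Fin d → ℝ)
    (hxy : ‖A.mulVec x - A.mulVec y‖ ≤ r)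
    (H : (Fin d → ℝ) → Matrix (Fin d) (Fin d) ℝ)
    (hH : ∀ z, H z = Aᵀ * Matrix.diagonal (fun i => iteratedDeriv 2 f (A.mulVec z i)) * A) :
    (H y - (Real.exp (C * r))⁻¹ • H x).PosSemidef ∧
    (Real.exp (C * r) • H x - H y).PosSemidef :=
  qsc_hessian_stability_general C r hC f hf hqsc A x y hxy H hH
end

section
/- Let A ∈ ℝ^{n×d}, g ∈ ℝ^d. Then the minimax identity holds: min over x with gᵀx = −1 of ‖Ax‖_∞² equals the supremum over nonzero r ∈ ℝ^n with r ≥ 0 of E(r)/‖r‖₁, where E(r) = min over x with gᵀx = −1 of Σᵢ rᵢ·(Ax)ᵢ², assuming the feasible set {x : gᵀx = −1} is nonempty (g ≠ 0). -/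
open Matrix

/-- Strong duality for ℓ∞ regression:
`min_{gᵀx = -1} ‖Ax‖_∞² = sup_{r ≥ 0, r ≠ 0} E(r)/‖r‖₁`, where
`E(r) = min_{gᵀx = -1} ⟨r, (Ax)²⟩`.  The norm on `Fin n → ℝ` is the sup norm. -/
theorem linf_regression_duality {n d : ℕ} (A : Matrix (Fin n) (Fin d) ℝ)
    (g : Fin d → ℝ) (hg : g ≠ 0) :
    sInf {t : ℝ | ∃ x : Fin d → ℝ, g ⬝ᵥ x = -1 ∧ t = ‖A.mulVec x‖ ^ 2} =
      sSup {t : ℝ | ∃ r : Fin n → ℝ, 0 ≤ r ∧ r ≠ 0 ∧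
        t = sInf {e : ℝ | ∃ x : Fin d → ℝ, g ⬝ᵥ x = -1 ∧
              e = ∑ i, r i * (A.mulVec x i) ^ 2} / (∑ i, r i)} := by
  classical
  -- a feasible point
  have hgg : g ⬝ᵥ g ≠ 0 := fun h => hg (dotProduct_self_eq_zero.mp h)
  set x₀ : Fin d → ℝ := (-(g ⬝ᵥ g)⁻¹) • g with hx₀def
  have hx₀ : g ⬝ᵥ x₀ = -1 := by
    rw [hx₀def, dotProduct_smul, smul_eq_mul, neg_mul, inv_mul_cancel₀ hgg]
  -- the image affine set
  set W : Set (Fin n → ℝ) := {y | ∃ x, g ⬝ᵥ x = -1 ∧ y = A.mulVec x} with hWdef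
  have hWne : W.Nonempty := ⟨A.mulVec x₀, x₀, hx₀, rfl⟩
  have hWclosed : IsClosed W := by
    set gl : (Fin d → ℝ) →ₗ[ℝ] ℝ :=
      { toFun := fun x => g ⬝ᵥ x
        map_add' := fun x y => dotProduct_add g x y
        map_smul' := fun c x => dotProduct_smul c g x }
    set V : Submodule ℝ (Fin n → ℝ) := Submodule.map A.mulVecLin (LinearMap.ker gl) with hVdef
    have hWeq : W = (fun y => y - A.mulVec x₀) ⁻¹' (V : Set (Fin n → ℝ)) := by
      ext y
      constructor
      · rintro ⟨x, hx, rfl⟩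
        refine ⟨x - x₀, ?_, ?_⟩
        · show g ⬝ᵥ (x - x₀) = 0
          rw [dotProduct_sub, hx, hx₀]; ring
        · simp [Matrix.mulVecLin_apply, Matrix.mulVec_sub]
      · rintro ⟨v, hv, hveq⟩
        refine ⟨x₀ + v, ?_, ?_⟩
        · have hv0 : g ⬝ᵥ v = 0 := hv
          rw [dotProduct_add, hx₀, hv0]; ring
        · have hAv : A.mulVec v = y - A.mulVec x₀ := by
            simpa [Matrix.mulVecLin_apply] using hveq
          rw [Matrix.mulVec_add, hAv]; abel
    rw [hWeq]
    exact (Submodule.closed_of_finiteDimensional V).preimage (continuous_id.sub continuous_const)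
  have hWconv : Convex ℝ W := by
    rintro y₁ ⟨x₁, h1, rfl⟩ y₂ ⟨x₂, h2, rfl⟩ a b ha hb hab
    refine ⟨a • x₁ + b • x₂, ?_, ?_⟩
    · rw [dotProduct_add, dotProduct_smul, dotProduct_smul, h1, h2]
      simp only [smul_eq_mul]; linarith
    · rw [Matrix.mulVec_add, Matrix.mulVec_smul, Matrix.mulVec_smul]
  -- minimum norm point
  obtain ⟨y₀, hy₀W, hy₀d⟩ := hWclosed.exists_infDist_eq_dist hWne 0
  have hy₀min : ∀ z ∈ W, ‖y₀‖ ≤ ‖z‖ := by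
    intro z hz
    have h := Metric.infDist_le_dist_of_mem (x := (0 : Fin n → ℝ)) hz
    rw [hy₀d] at h
    simpa [dist_zero_left] using h
  set μ : ℝ := ‖y₀‖ with hμdef
  have hμ0 : 0 ≤ μ := norm_nonneg _
  obtain ⟨xm, hxm, hxmy⟩ := hy₀W
  -- names for the primal/dual sets
  set S := {t : ℝ | ∃ x : Fin d → ℝ, g ⬝ᵥ x = -1 ∧ t = ‖A.mulVec x‖ ^ 2} with hSdef
  set T := {t : ℝ | ∃ r : Fin n → ℝ, 0 ≤ r ∧ r ≠ 0 ∧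
        t = sInf {e : ℝ | ∃ x : Fin d → ℝ, g ⬝ᵥ x = -1 ∧
              e = ∑ i, r i * (A.mulVec x i) ^ 2} / (∑ i, r i)} with hTdef
  have hSinf : sInf S = μ ^ 2 := by
    apply le_antisymm
    · have hmem : μ ^ 2 ∈ S := ⟨xm, hxm, by rw [hμdef, hxmy]⟩
      exact csInf_le ⟨0, by rintro t ⟨x, hx, rfl⟩; positivity⟩ hmem
    · have hne : S.Nonempty := ⟨‖A.mulVec x₀‖ ^ 2, x₀, hx₀, rfl⟩
      apply le_csInf hne
      rintro t ⟨x, hx, rfl⟩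
      exact pow_le_pow_left₀ hμ0 (hy₀min _ ⟨x, hx, rfl⟩) 2
  -- weak duality
  have hweak : ∀ t ∈ T, t ≤ μ ^ 2 := by
    rintro t ⟨r, hr0, hrne, rfl⟩
    have hrpos : 0 < ∑ i, r i := by
      obtain ⟨i, hi⟩ := Function.ne_iff.mp hrne
      exact Finset.sum_pos' (fun j _ => hr0 j)
        ⟨i, Finset.mem_univ i, lt_of_le_of_ne (hr0 i) (Ne.symm hi)⟩
    rw [div_le_iff₀ hrpos]
    have hmem : (∑ i, r i * (A.mulVec xm i) ^ 2) ∈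
        {e : ℝ | ∃ x : Fin d → ℝ, g ⬝ᵥ x = -1 ∧ e = ∑ i, r i * (A.mulVec x i) ^ 2} :=
      ⟨xm, hxm, rfl⟩
    have hbdd : BddBelow {e : ℝ | ∃ x : Fin d → ℝ, g ⬝ᵥ x = -1 ∧
        e = ∑ i, r i * (A.mulVec x i) ^ 2} := by
      refine ⟨0, ?_⟩
      rintro e ⟨x, hx, rfl⟩
      exact Finset.sum_nonneg fun i _ => mul_nonneg (hr0 i) (sq_nonneg _)
    have hE := csInf_le hbdd hmem
    refine hE.trans ?_
    rw [Finset.mul_sum]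
    apply Finset.sum_le_sum
    intro i _
    have h1 : |A.mulVec xm i| ≤ μ := by
      rw [hμdef, hxmy]
      exact norm_le_pi_norm (A.mulVec xm) i
    have h2 : (A.mulVec xm i) ^ 2 ≤ μ ^ 2 := by
      rw [← sq_abs]; exact pow_le_pow_left₀ (abs_nonneg _) h1 2
    have h3 : (0:ℝ) ≤ r i := hr0 i
    nlinarith
  rw [hSinf]
  apply le_antisymm
  · -- strong duality direction
    rcases eq_or_lt_of_le hμ0 with hμz | hμpos
    · -- μ = 0
      rw [← hμz]
      rw [show ((0:ℝ) ^ 2) = 0 by norm_num]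
      rcases Nat.eq_zero_or_pos n with hn | hn
      · -- n = 0 : T is empty, sSup T = 0
        have hTempty : T = ∅ := by
          rw [Set.eq_empty_iff_forall_notMem]
          rintro t ⟨r, _, hrne, _⟩
          subst hn
          exact hrne (Subsingleton.elim r 0)
        rw [hTempty, Real.sSup_empty]
      · -- n > 0 : the all-ones r gives a nonnegative element of T
        set r : Fin n → ℝ := fun _ => 1 with hrdef
        have hrne : r ≠ 0 := by
          intro h
          have h0 := congrFun h ⟨0, hn⟩
          simp [hrdef] at h0
        have hEnn : (0:ℝ) ≤ sInf {e : ℝ | ∃ x : Fin d → ℝ, g ⬝ᵥ x = -1 ∧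
            e = ∑ i, r i * (A.mulVec x i) ^ 2} := by
          have hne : {e : ℝ | ∃ x : Fin d → ℝ, g ⬝ᵥ x = -1 ∧
              e = ∑ i, r i * (A.mulVec x i) ^ 2}.Nonempty :=
            ⟨∑ i, r i * (A.mulVec x₀ i) ^ 2, x₀, hx₀, rfl⟩
          apply le_csInf hne
          rintro e ⟨x, hx, rfl⟩
          exact Finset.sum_nonneg fun i _ => mul_nonneg zero_le_one (sq_nonneg _)
        have hmem : sInf {e : ℝ | ∃ x : Fin d → ℝ, g ⬝ᵥ x = -1 ∧
            e = ∑ i, r i * (A.mulVec x i) ^ 2} / (∑ i, r i) ∈ T :=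
          ⟨r, fun i => zero_le_one, hrne, rfl⟩
        have hnn : (0:ℝ) ≤ sInf {e : ℝ | ∃ x : Fin d → ℝ, g ⬝ᵥ x = -1 ∧
            e = ∑ i, r i * (A.mulVec x i) ^ 2} / (∑ i, r i) := by
          apply div_nonneg hEnn
          exact Finset.sum_nonneg fun i _ => zero_le_one
        exact hnn.trans (le_csSup ⟨μ ^ 2, fun t ht => hweak t ht⟩ hmem)
    · -- μ > 0 : separation argument
      obtain ⟨f, u, hfball, hfW⟩ := geometric_hahn_banach_open
        (convex_ball (0 : Fin n → ℝ) μ) Metric.isOpen_ball hWconv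
        (by
          rw [Set.disjoint_left]
          intro y hy hyW
          rw [Metric.mem_ball, dist_zero_right] at hy
          exact absurd (hy₀min y hyW) (not_le.mpr hy))
      have hu : 0 < u := by
        have h0 := hfball 0 (Metric.mem_ball_self hμpos)
        simpa using h0
      set c : Fin n → ℝ := fun i => f (fun j => if i = j then 1 else 0) with hcdef
      have hf : ∀ y : Fin n → ℝ, f y = ∑ i, c i * y i := by
        intro y
        conv_lhs => rw [pi_eq_sum_univ y]
        rw [map_sum]
        simp only [_root_.map_smul, smul_eq_mul]
        exact Finset.sum_congr rfl fun i _ => mul_comm _ _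
      have hCpos : 0 < ∑ i, |c i| := by
        rcases eq_or_lt_of_le (Finset.sum_nonneg fun i (_ : i ∈ Finset.univ) =>
            abs_nonneg (c i)) with h0 | h
        · exfalso
          have hc0 : ∀ i, c i = 0 := by
            intro i
            have hz := (Finset.sum_eq_zero_iff_of_nonneg
              (fun i _ => abs_nonneg (c i))).mp h0.symm i (Finset.mem_univ i)
            exact abs_eq_zero.mp hz
          have hf0 : f (A.mulVec xm) = 0 := by rw [hf]; simp [hc0]
          have hge := hfW _ ⟨xm, hxm, rfl⟩
          rw [hf0] at hge
          linarith
        · exact h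
      have hkey : μ * ∑ i, |c i| ≤ u := by
        by_contra hlt
        push_neg at hlt
        set s' : ℝ := u / ∑ i, |c i| with hs'
        have hs'0 : 0 ≤ s' := le_of_lt (div_pos hu hCpos)
        have hs'μ : s' < μ := by
          rw [hs', div_lt_iff₀ hCpos]; linarith
        set y : Fin n → ℝ := fun i => if 0 ≤ c i then s' else -s' with hydef
        have hyb : y ∈ Metric.ball (0 : Fin n → ℝ) μ := by
          rw [Metric.mem_ball, dist_zero_right]
          refine lt_of_le_of_lt ((pi_norm_le_iff_of_nonneg hs'0).mpr fun i => ?_) hs'μ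
          by_cases h : 0 ≤ c i <;> simp [hydef, h, abs_of_nonneg hs'0]
        have hfy : f y = u := by
          rw [hf]
          have hterm : ∀ i, c i * y i = |c i| * s' := by
            intro i
            by_cases h : 0 ≤ c i
            · simp [hydef, h, abs_of_nonneg h]
            · push_neg at h
              simp only [hydef, not_le.mpr h, if_neg (not_le.mpr h), abs_of_neg h]
              ring
          rw [Finset.sum_congr rfl fun i _ => hterm i, ← Finset.sum_mul, hs',
            mul_div_cancel₀ _ (ne_of_gt hCpos)]
        have hcon := hfball y hyb
        rw [hfy] at hcon
        exact lt_irrefl u hcon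
      -- Cauchy–Schwarz step
      have hCS : ∀ x : Fin d → ℝ, g ⬝ᵥ x = -1 →
          μ ^ 2 * (∑ i, |c i|) ≤ ∑ i, |c i| * (A.mulVec x i) ^ 2 := by
        intro x hx
        set y := A.mulVec x with hy
        have h1 : u ≤ f y := hfW y ⟨x, hx, rfl⟩
        have h2 : f y ≤ ∑ i, |c i| * |y i| := by
          rw [hf]
          apply Finset.sum_le_sum
          intro i _
          calc c i * y i ≤ |c i * y i| := le_abs_self _
            _ = |c i| * |y i| := abs_mul _ _
        have hP : μ * ∑ i, |c i| ≤ ∑ i, |c i| * |y i| := hkey.trans (h1.trans h2)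
        have hcs := Finset.sum_mul_sq_le_sq_mul_sq Finset.univ
          (fun i => Real.sqrt (|c i|)) (fun i => Real.sqrt (|c i|) * |y i|)
        have e1 : ∀ i : Fin n, Real.sqrt (|c i|) * (Real.sqrt (|c i|) * |y i|)
            = |c i| * |y i| := by
          intro i; rw [← mul_assoc, Real.mul_self_sqrt (abs_nonneg _)]
        have e2 : ∀ i : Fin n, Real.sqrt (|c i|) ^ 2 = |c i| := fun i =>
          Real.sq_sqrt (abs_nonneg _)
        have e3 : ∀ i : Fin n, (Real.sqrt (|c i|) * |y i|) ^ 2 = |c i| * (y i) ^ 2 := by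
          intro i; rw [mul_pow, Real.sq_sqrt (abs_nonneg _), sq_abs]
        rw [Finset.sum_congr rfl fun i _ => e1 i, Finset.sum_congr rfl fun i _ => e2 i,
          Finset.sum_congr rfl fun i _ => e3 i] at hcs
        nlinarith [hP, hcs, hCpos, hμ0,
          mul_self_le_mul_self (mul_nonneg hμ0 hCpos.le) hP]
      set r : Fin n → ℝ := fun i => |c i| with hrdef
      have hrsum : (∑ i, r i) = ∑ i, |c i| := rfl
      have hrne : r ≠ 0 := by
        intro h
        have hc0 : ∀ i, |c i| = 0 := fun i => congrFun h i
        rw [Finset.sum_congr rfl fun i _ => hc0 i] at hCpos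
        simp at hCpos
      have hne : {e : ℝ | ∃ x : Fin d → ℝ, g ⬝ᵥ x = -1 ∧
          e = ∑ i, r i * (A.mulVec x i) ^ 2}.Nonempty :=
        ⟨∑ i, r i * (A.mulVec x₀ i) ^ 2, x₀, hx₀, rfl⟩
      have hEge : μ ^ 2 * (∑ i, r i) ≤ sInf {e : ℝ | ∃ x : Fin d → ℝ, g ⬝ᵥ x = -1 ∧
          e = ∑ i, r i * (A.mulVec x i) ^ 2} := by
        apply le_csInf hne
        rintro e ⟨x, hx, rfl⟩
        exact hCS x hx
      have hmem : sInf {e : ℝ | ∃ x : Fin d → ℝ, g ⬝ᵥ x = -1 ∧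
          e = ∑ i, r i * (A.mulVec x i) ^ 2} / (∑ i, r i) ∈ T :=
        ⟨r, fun i => abs_nonneg _, hrne, rfl⟩
      have hfinal : μ ^ 2 ≤ sInf {e : ℝ | ∃ x : Fin d → ℝ, g ⬝ᵥ x = -1 ∧
          e = ∑ i, r i * (A.mulVec x i) ^ 2} / (∑ i, r i) := by
        rw [le_div_iff₀ (by rw [hrsum]; exact hCpos)]
        exact hEge
      exact hfinal.trans (le_csSup ⟨μ ^ 2, fun t ht => hweak t ht⟩ hmem)
  · exact Real.sSup_le hweak (by positivity)
end

section
/- Let A ∈ ℝ^{n×d}, g ∈ ℝ^d with g ≠ 0, and let r, r' ∈ ℝ^n with 0 < r ≤ r' coordinatewise. Let x be a minimizer of ⟨r, (Ax)²⟩ over {x : gᵀx = −1}. Then E(r') − E(r) ≥ Σᵢ (Ax)ᵢ²·rᵢ·(1 − rᵢ/r'ᵢ), where E(s) = min_{gᵀy = −1} ⟨s, (Ay)²⟩. -/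
open Matrix

lemma aux_quad_zero (Q B : ℝ) (hQ : 0 ≤ Q) (h : ∀ t : ℝ, 0 ≤ 2*t*B + t^2*Q) : B = 0 := by
  by_contra hB
  have h1 : 0 < Q + 1 := by linarith
  have := h (-B/(Q+1))
  have hB2 : 0 < B^2 := by positivity
  have heq : 2 * (-B/(Q+1)) * B + (-B/(Q+1))^2 * Q = (-(B^2*(Q+2)))/(Q+1)^2 := by
    field_simp; ring
  rw [heq, le_div_iff₀ (by positivity)] at this
  nlinarith

/-- Energy increase lower bound: if `x` minimizes `⟨r, (Ax)²⟩` over `{x : gᵀx = -1}`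
and `0 < r ≤ r'` coordinatewise, then
`E(r') - E(r) ≥ ∑ i (Ax)ᵢ² rᵢ (1 - rᵢ/r'ᵢ)`. -/
theorem energy_increase_lower_bound {n d : ℕ} (A : Matrix (Fin n) (Fin d) ℝ)
    (g : Fin d → ℝ) (hg : g ≠ 0)
    (r r' : Fin n → ℝ) (hr : ∀ i, 0 < r i) (hrr' : ∀ i, r i ≤ r' i)
    (E : (Fin n → ℝ) → ℝ)
    (hE : ∀ s : Fin n → ℝ,
      E s = sInf {e : ℝ | ∃ y : Fin d → ℝ, g ⬝ᵥ y = -1 ∧ e = ∑ i, s i * (A.mulVec y i) ^ 2})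
    (x : Fin d → ℝ) (hx : g ⬝ᵥ x = -1)
    (hmin : ∀ y : Fin d → ℝ, g ⬝ᵥ y = -1 →
      ∑ i, r i * (A.mulVec x i) ^ 2 ≤ ∑ i, r i * (A.mulVec y i) ^ 2) :
    E r' - E r ≥ ∑ i, (A.mulVec x i) ^ 2 * r i * (1 - r i / r' i) := by
  set f := A.mulVec x with hf
  have hr' : ∀ i, 0 < r' i := fun i => lt_of_lt_of_le (hr i) (hrr' i)
  set Er : ℝ := ∑ i, r i * f i ^ 2 with hEr
  set C : ℝ := ∑ i, (r i ^ 2 / r' i) * f i ^ 2 with hC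
  -- Step 1: E r = Er
  have h1 : E r = Er := by
    rw [hE r]
    apply IsLeast.csInf_eq
    constructor
    · exact ⟨x, hx, rfl⟩
    · rintro e ⟨y, hy, rfl⟩
      exact hmin y hy
  -- Step 2: first order condition
  have horth : ∀ y : Fin d → ℝ, g ⬝ᵥ y = -1 → ∑ i, r i * f i * A.mulVec y i = Er := by
    intro y hy
    set z := y - x with hz
    have hgz : g ⬝ᵥ z = 0 := by
      simp [hz, dotProduct_sub, hy, hx]
    set B : ℝ := ∑ i, r i * f i * A.mulVec z i with hB
    set Q : ℝ := ∑ i, r i * (A.mulVec z i) ^ 2 with hQ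
    have hQ0 : 0 ≤ Q := Finset.sum_nonneg fun i _ =>
      mul_nonneg (hr i).le (sq_nonneg _)
    have hB0 : B = 0 := by
      apply aux_quad_zero Q B hQ0
      intro t
      have hfeas : g ⬝ᵥ (x + t • z) = -1 := by
        simp [dotProduct_add, hx, dotProduct_smul, hgz]
      have := hmin (x + t • z) hfeas
      have hexp : ∑ i, r i * (A.mulVec (x + t • z) i) ^ 2
          = Er + (2*t*B + t^2*Q) := by
        rw [hEr, hB, hQ]
        rw [Finset.mul_sum, Finset.mul_sum, ← Finset.sum_add_distrib, ← Finset.sum_add_distrib]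
        apply Finset.sum_congr rfl
        intro i _
        rw [A.mulVec_add, A.mulVec_smul]
        simp only [Pi.add_apply, Pi.smul_apply, smul_eq_mul, ← hf]
        ring
      rw [hexp] at this
      linarith
    have : ∑ i, r i * f i * A.mulVec y i = Er + B := by
      rw [hEr, hB, ← Finset.sum_add_distrib]
      apply Finset.sum_congr rfl
      intro i _
      have : A.mulVec z i = A.mulVec y i - f i := by
        simp [hz, A.mulVec_sub, hf]
      rw [this]; ring
    rw [this, hB0, add_zero]
  -- Step 3: E r' ≥ 2*Er - C
  have h3 : 2 * Er - C ≤ E r' := by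
    rw [hE r']
    refine le_csInf ⟨∑ i, r' i * (A.mulVec x i) ^ 2, x, hx, rfl⟩ ?_
    rintro e ⟨y, hy, rfl⟩
    have hkey : ∀ i, r' i * (A.mulVec y i) ^ 2
        ≥ 2 * (r i * f i * A.mulVec y i) - (r i ^ 2 / r' i) * f i ^ 2 := by
      intro i
      have h0 : 0 < r' i := hr' i
      have hsq : 0 ≤ r' i * (A.mulVec y i - (r i / r' i) * f i) ^ 2 := by positivity
      have : r' i * (A.mulVec y i - (r i / r' i) * f i) ^ 2
          = r' i * (A.mulVec y i) ^ 2 - 2 * (r i * f i * A.mulVec y i)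
            + (r i ^ 2 / r' i) * f i ^ 2 := by
        field_simp
        ring
      linarith [this ▸ hsq]
    have hsum := Finset.sum_le_sum (fun i (_ : i ∈ Finset.univ) => hkey i)
    rw [Finset.sum_sub_distrib, ← Finset.mul_sum, horth y hy] at hsum
    rw [hC]
    linarith
  -- Step 4: RHS = Er - C
  have h4 : ∑ i, f i ^ 2 * r i * (1 - r i / r' i) = Er - C := by
    rw [hEr, hC, ← Finset.sum_sub_distrib]
    apply Finset.sum_congr rfl
    intro i _
    have h0 : (r' i) ≠ 0 := (hr' i).ne'
    field_simp
  rw [ge_iff_le, h1, h4]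
  linarith
end

section
/- Let h: ℝ^d → ℝ be of the form h(x) = Σᵢ f((Ax − b)ᵢ) with f C-quasi-self-concordant. Fix x and let res_x(Δ) = ∇f(x)ᵀ(AΔ) − (1/e)·(AΔ)ᵀ∇²f(x)(AΔ). If ‖AΔ‖_∞ ≤ 1/C, then h(x − Δ) − h(x) ≥ −res_x(Δ). -/
/-!
Quasi-self-concordance `|f'''| ≤ C f''` is a Grönwall inequality for `f''`; run in both
directions, it gives `f''(u + t) ≥ f''(u) e^{-C|t|}`. Integrating this twice from `u` gives
`f(u + s) ≥ f(u) + f'(u) s + f''(u) (e^{-C|s|} + C|s| - 1) / C²`, and for `C|s| ≤ 1` the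
elementary inequality `e^{-r} + r - 1 ≥ r² / e` (an equality at `r = 1`) bounds the last term
below by `f''(u) s² / e`. Summing over the coordinates `u = (Ax - b)ᵢ`, `s = -(AΔ)ᵢ` gives the
theorem.
-/

open Real Set

theorem image_le_of_second_deriv_le {φ φ' φ'' ψ ψ' ψ'' : ℝ → ℝ} {a b : ℝ}
    (hφ : ∀ x, HasDerivAt φ (φ' x) x) (hφ' : ∀ x, HasDerivAt φ' (φ'' x) x)
    (hψ : ∀ x, HasDerivAt ψ (ψ' x) x) (hψ' : ∀ x, HasDerivAt ψ' (ψ'' x) x)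
    (h₀ : ψ a ≤ φ a) (h₁ : ψ' a ≤ φ' a) (h₂ : ∀ x ∈ Ico a b, ψ'' x ≤ φ'' x) :
    ∀ x ∈ Icc a b, ψ x ≤ φ x := by
  have hcont {g g' : ℝ → ℝ} (hg : ∀ x, HasDerivAt g (g' x) x) : ContinuousOn g (Icc a b) :=
    fun x _ => (hg x).continuousAt.continuousWithinAt
  have hder' : ∀ x ∈ Icc a b, ψ' x ≤ φ' x :=
    image_le_of_deriv_right_le_deriv_boundary (hcont hψ') (fun x _ => (hψ' x).hasDerivWithinAt)
      h₁ (hcont hφ') (fun x _ => (hφ' x).hasDerivWithinAt) h₂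
  exact image_le_of_deriv_right_le_deriv_boundary (hcont hψ)
    (fun x _ => (hψ x).hasDerivWithinAt) h₀ (hcont hφ) (fun x _ => (hφ x).hasDerivWithinAt)
    fun x hx => hder' x (Ico_subset_Icc_self hx)

theorem norm_le_norm_mul_exp_of_norm_deriv_le {E : Type*} [NormedAddCommGroup E]
    [NormedSpace ℝ E] {g g' : ℝ → E} {K : ℝ} (hg : ∀ x, HasDerivAt g (g' x) x)
    (hbound : ∀ x, ‖g' x‖ ≤ K * ‖g x‖) (a b : ℝ) :
    ‖g b‖ ≤ ‖g a‖ * exp (K * |b - a|) := by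
  have forward : ∀ {h h' : ℝ → E}, (∀ x, HasDerivAt h (h' x) x) →
      (∀ x, ‖h' x‖ ≤ K * ‖h x‖) →
      ∀ a b, a ≤ b → ‖h b‖ ≤ ‖h a‖ * exp (K * (b - a)) := by
    intro h h' hh hhb a b hab
    have := norm_le_gronwallBound_of_norm_deriv_right_le (b := b) (δ := ‖h a‖) (ε := 0)
      (fun x _ => (hh x).continuousAt.continuousWithinAt) (fun x _ => (hh x).hasDerivWithinAt)
      le_rfl (fun x _ => by simpa using hhb x) b (right_mem_Icc.2 hab)
    rwa [gronwallBound_ε0] at this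
  rcases le_total a b with hab | hba
  · simpa [abs_of_nonneg (sub_nonneg.2 hab)] using forward hg hbound a b hab
  · have hrefl : ∀ x, HasDerivAt (fun x => g (-x)) (-g' (-x)) x := fun x => by
      simpa [Function.comp_def] using (hg (-x)).scomp x (hasDerivAt_neg x)
    have := forward hrefl (fun x => by simpa using hbound (-x)) (-a) (-b) (neg_le_neg hba)
    rw [abs_of_nonpos (sub_nonpos.2 hba), neg_sub]
    rwa [neg_neg, neg_neg, neg_sub_neg] at this

theorem sq_mul_exp_sub_one_le {r : ℝ} (h₀ : 0 ≤ r) (h₁ : r ≤ 1) :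
    r ^ 2 * exp (r - 1) ≤ 1 + (r - 1) * exp r := by
  set g : ℝ → ℝ := fun r => 1 + (r - 1) * exp r - r ^ 2 * exp (r - 1)
  have hexp : ∀ r, exp r = exp (r - 1) * exp 1 := fun r => by rw [← exp_add, sub_add_cancel]
  have hg : ∀ r, HasDerivAt g (r * exp (r - 1) * (exp 1 - 2 - r)) r := fun r => by
    have := ((hasDerivAt_id r).sub_const 1).mul (hasDerivAt_exp r) |>.const_add 1 |>.sub
      ((hasDerivAt_pow 2 r).mul ((hasDerivAt_exp (r - 1)).comp r ((hasDerivAt_id r).sub_const 1)))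
    refine this.congr_deriv ?_
    simp only [id, Function.comp_apply, hexp r]
    ring
  have hcont : ContinuousOn g univ := fun r _ => (hg r).continuousAt.continuousWithinAt
  have he : 2 < exp 1 := by linarith [exp_one_gt_d9]
  have he' : exp 1 < 3 := by linarith [exp_one_lt_d9]
  suffices 0 ≤ g r by simp only [g] at this; linarith
  rcases le_total r (exp 1 - 2) with hr | hr
  · have hmono : MonotoneOn g (Icc 0 (exp 1 - 2)) := by
      refine monotoneOn_of_hasDerivWithinAt_nonneg (convex_Icc _ _) (hcont.mono (subset_univ _))
        (fun x _ => (hg x).hasDerivWithinAt) fun x hx => ?_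
      rw [interior_Icc] at hx
      exact mul_nonneg (mul_nonneg hx.1.le (exp_pos _).le) (by linarith [hx.2])
    simpa [g] using hmono ⟨le_rfl, by linarith⟩ ⟨h₀, hr⟩ h₀
  · have hanti : AntitoneOn g (Icc (exp 1 - 2) 1) := by
      refine antitoneOn_of_hasDerivWithinAt_nonpos (convex_Icc _ _) (hcont.mono (subset_univ _))
        (fun x _ => (hg x).hasDerivWithinAt) fun x hx => ?_
      rw [interior_Icc] at hx
      have := mul_pos (show 0 < x by linarith [hx.1]) (exp_pos (x - 1))
      exact mul_nonpos_of_nonneg_of_nonpos this.le (by linarith [hx.1])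
    simpa [g] using hanti ⟨hr, h₁⟩ ⟨by linarith, le_rfl⟩ h₁

theorem inv_exp_one_mul_sq_le {r : ℝ} (h₀ : 0 ≤ r) (h₁ : r ≤ 1) :
    (exp 1)⁻¹ * r ^ 2 ≤ exp (-r) + r - 1 := by
  have key := mul_le_mul_of_nonneg_right (sq_mul_exp_sub_one_le h₀ h₁) (exp_pos (-r)).le
  have e₁ : exp (r - 1) * exp (-r) = (exp 1)⁻¹ := by rw [← exp_add, ← exp_neg]; ring_nf
  have e₂ : exp r * exp (-r) = 1 := by rw [← exp_add, add_neg_cancel, exp_zero]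
  calc (exp 1)⁻¹ * r ^ 2 = r ^ 2 * exp (r - 1) * exp (-r) := by rw [mul_assoc, e₁, mul_comm]
    _ ≤ (1 + (r - 1) * exp r) * exp (-r) := key
    _ = exp (-r) + r - 1 := by linear_combination (r - 1) * e₂

theorem mul_exp_neg_le_of_abs_deriv_le {g g' : ℝ → ℝ} {C : ℝ} (hC : 0 < C)
    (hg : ∀ x, HasDerivAt g (g' x) x) (hbound : ∀ x, |g' x| ≤ C * g x) (u t : ℝ) :
    g u * exp (-(C * |t|)) ≤ g (u + t) := by
  have hg₀ : ∀ x, 0 ≤ g x := fun x =>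
    nonneg_of_mul_nonneg_right ((abs_nonneg _).trans (hbound x)) hC
  have := norm_le_norm_mul_exp_of_norm_deriv_le hg
    (fun x => by simpa [Real.norm_eq_abs, abs_of_nonneg (hg₀ x)] using hbound x) (u + t) u
  simp only [Real.norm_eq_abs, abs_of_nonneg (hg₀ _), sub_add_cancel_left, abs_neg] at this
  rw [← le_div_iff₀ (exp_pos _), exp_neg, div_inv_eq_mul]
  exact this

theorem quadratic_lower_bound_of_exp_stable_of_nonneg {g g' g'' : ℝ → ℝ} {C u s : ℝ}
    (hC : 0 < C) (hg : ∀ x, HasDerivAt g (g' x) x) (hg' : ∀ x, HasDerivAt g' (g'' x) x)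
    (hg''₀ : 0 ≤ g'' u) (hstab : ∀ t, g'' u * exp (-(C * |t|)) ≤ g'' (u + t))
    (hs₀ : 0 ≤ s) (hs : s ≤ 1 / C) :
    g u + g' u * s + (exp 1)⁻¹ * g'' u * s ^ 2 ≤ g (u + s) := by
  set K := g'' u
  have hE : ∀ t, HasDerivAt (fun t => exp (-C * t)) (-C * exp (-C * t)) t := fun t => by
    simpa [mul_comm] using ((hasDerivAt_id t).const_mul (-C)).exp
  have hψ : ∀ t, HasDerivAt (fun t => g u + g' u * t + K * (exp (-C * t) + C * t - 1) / C ^ 2)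
      (g' u + K * (1 - exp (-C * t)) / C) t := fun t => by
    refine (((hasDerivAt_id t).const_mul (g' u)).const_add (g u)).add
      ((((hE t).add ((hasDerivAt_id t).const_mul C)).sub_const 1).const_mul K |>.div_const (C ^ 2))
      |>.congr_deriv ?_
    field_simp
    ring
  have hψ' : ∀ t, HasDerivAt (fun t => g' u + K * (1 - exp (-C * t)) / C) (K * exp (-C * t)) t :=
    fun t => by
    refine ((((hE t).const_sub 1).const_mul K).div_const C).const_add (g' u) |>.congr_deriv ?_
    field_simp
  have hcomp : g u + g' u * s + K * (exp (-C * s) + C * s - 1) / C ^ 2 ≤ g (u + s) :=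
    image_le_of_second_deriv_le (fun t => (hg (u + t)).comp_const_add u t)
      (fun t => (hg' (u + t)).comp_const_add u t) hψ hψ' (by simp) (by simp)
      (fun t ht => by simpa [abs_of_nonneg ht.1, neg_mul] using hstab t) s (right_mem_Icc.2 hs₀)
  have hscalar : (exp 1)⁻¹ * (C * s) ^ 2 ≤ exp (-(C * s)) + C * s - 1 :=
    inv_exp_one_mul_sq_le (by positivity) (by rwa [le_div_iff₀' hC] at hs)
  calc g u + g' u * s + (exp 1)⁻¹ * K * s ^ 2
      = g u + g' u * s + K * ((exp 1)⁻¹ * (C * s) ^ 2) / C ^ 2 := by field_simp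
    _ ≤ g u + g' u * s + K * (exp (-(C * s)) + C * s - 1) / C ^ 2 := by gcongr
    _ ≤ g (u + s) := by rwa [← neg_mul]

theorem quadratic_lower_bound_of_exp_stable {g g' g'' : ℝ → ℝ} {C u s : ℝ} (hC : 0 < C)
    (hg : ∀ x, HasDerivAt g (g' x) x) (hg' : ∀ x, HasDerivAt g' (g'' x) x)
    (hg''₀ : 0 ≤ g'' u) (hstab : ∀ t, g'' u * exp (-(C * |t|)) ≤ g'' (u + t))
    (hs : |s| ≤ 1 / C) :
    g u + g' u * s + (exp 1)⁻¹ * g'' u * s ^ 2 ≤ g (u + s) := by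
  rcases le_total 0 s with hs₀ | hs₀
  · exact quadratic_lower_bound_of_exp_stable_of_nonneg hC hg hg' hg''₀ hstab hs₀
      ((le_abs_self s).trans hs)
  · have := quadratic_lower_bound_of_exp_stable_of_nonneg (g := fun x => g (-x))
      (g' := fun x => -g' (-x)) (g'' := fun x => g'' (-x)) (u := -u) (s := -s) hC
      (fun x => by simpa [Function.comp_def] using (hg (-x)).scomp x (hasDerivAt_neg x))
      (fun x => by simpa [Function.comp_def] using (hg' (-x)).neg.scomp x (hasDerivAt_neg x))
      (by simpa using hg''₀)
      (fun t => by simpa [neg_add_eq_sub, ← sub_eq_add_neg] using hstab (-t))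
      (neg_nonneg.2 hs₀) ((neg_le_abs s).trans hs)
    simpa [neg_add_eq_sub, ← sub_eq_add_neg, add_comm] using this

theorem quadratic_lower_bound_of_abs_iteratedDeriv_three_le {f : ℝ → ℝ} {C : ℝ} (hC : 0 < C)
    (hf : ContDiff ℝ 3 f) (hqsc : ∀ t, |iteratedDeriv 3 f t| ≤ C * iteratedDeriv 2 f t)
    (u s : ℝ) (hs : |s| ≤ 1 / C) :
    f u + deriv f u * s + (exp 1)⁻¹ * iteratedDeriv 2 f u * s ^ 2 ≤ f (u + s) := by
  have hderiv : ∀ m < 3, ∀ x, HasDerivAt (iteratedDeriv m f) (iteratedDeriv (m + 1) f x) x :=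
    fun m hm x => by
      rw [iteratedDeriv_succ]
      exact (hf.differentiable_iteratedDeriv m (by exact_mod_cast hm) x).hasDerivAt
  have hf' : ∀ x, HasDerivAt f (deriv f x) x := by simpa using hderiv 0 (by norm_num)
  have hf'' : ∀ x, HasDerivAt (deriv f) (iteratedDeriv 2 f x) x := by
    simpa using hderiv 1 (by norm_num)
  exact quadratic_lower_bound_of_exp_stable hC hf' hf''
    (nonneg_of_mul_nonneg_right ((abs_nonneg _).trans (hqsc u)) hC)
    (mul_exp_neg_le_of_abs_deriv_le hC (hderiv 2 (by norm_num)) hqsc u) hs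

open Matrix

theorem residual_lower_bound_general {n d : ℕ} (C : ℝ) (hC : 0 < C) (f : ℝ → ℝ)
    (hf : ContDiff ℝ 3 f)
    (hqsc : ∀ t : ℝ, |iteratedDeriv 3 f t| ≤ C * iteratedDeriv 2 f t)
    (A : Matrix (Fin n) (Fin d) ℝ) (b : Fin n → ℝ)
    (h : (Fin d → ℝ) → ℝ)
    (hh : ∀ z, h z = ∑ i, f ((A.mulVec z - b) i))
    (x Δ : Fin d → ℝ) (hΔ : ‖A.mulVec Δ‖ ≤ 1 / C) :
    h (x - Δ) - h x ≥
      -((∑ i, deriv f ((A.mulVec x - b) i) * A.mulVec Δ i) -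
        (Real.exp 1)⁻¹ * ∑ i, iteratedDeriv 2 f ((A.mulVec x - b) i) * (A.mulVec Δ i) ^ 2) := by
  set r := A.mulVec x - b
  set v := A.mulVec Δ
  have hcoord : ∀ i, f (r i) - deriv f (r i) * v i
      + (exp 1)⁻¹ * iteratedDeriv 2 f (r i) * v i ^ 2 ≤ f ((A.mulVec (x - Δ) - b) i) :=
    fun i => by
      have hs : |-v i| ≤ 1 / C := by
        rw [abs_neg, ← Real.norm_eq_abs]; exact (norm_le_pi_norm v i).trans hΔ
      have harg : (A.mulVec (x - Δ) - b) i = r i + -v i := by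
        simp only [r, v, mulVec_sub, Pi.sub_apply]; ring
      rw [harg]
      linarith [quadratic_lower_bound_of_abs_iteratedDeriv_three_le hC hf hqsc (r i) (-v i) hs,
        neg_sq (v i)]
  have hsum := Finset.sum_le_sum fun i (_ : i ∈ Finset.univ) => hcoord i
  simp only [Finset.sum_add_distrib, Finset.sum_sub_distrib, ← Finset.mul_sum, mul_assoc] at hsum
  rw [hh, hh]
  linarith

/-- Lower Taylor bound from Hessian stability: for `h x = ∑ i, f ((Ax - b)ᵢ)` with
`f` C-QSC and `‖AΔ‖_∞ ≤ 1/C`, we have `h (x - Δ) - h x ≥ -res_x(Δ)` where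
`res_x(Δ) = ∇f(x)ᵀ(AΔ) - (1/e) (AΔ)ᵀ ∇²f(x) (AΔ)`. -/
theorem residual_lower_bound {n d : ℕ} (C : ℝ) (hC : 0 < C) (f : ℝ → ℝ)
    (hf : ContDiff ℝ 3 f) (hconv : ConvexOn ℝ Set.univ f)
    (hqsc : ∀ t : ℝ, |iteratedDeriv 3 f t| ≤ C * iteratedDeriv 2 f t)
    (A : Matrix (Fin n) (Fin d) ℝ) (b : Fin n → ℝ)
    (h : (Fin d → ℝ) → ℝ)
    (hh : ∀ z, h z = ∑ i, f ((A.mulVec z - b) i))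
    (x Δ : Fin d → ℝ) (hΔ : ‖A.mulVec Δ‖ ≤ 1 / C) :
    h (x - Δ) - h x ≥
      -((∑ i, deriv f ((A.mulVec x - b) i) * A.mulVec Δ i) -
        (Real.exp 1)⁻¹ * ∑ i, iteratedDeriv 2 f ((A.mulVec x - b) i) * (A.mulVec Δ i) ^ 2) :=
  residual_lower_bound_general C hC f hf hqsc A b h hh x Δ hΔ
end

section
/- Let h(x) = Σᵢ f((Ax−b)ᵢ) with f C-quasi-self-concordant, and res_x(Δ) = ∇f(x)ᵀ(AΔ) − (1/e)(AΔ)ᵀ∇²f(x)(AΔ). If ‖AΔ‖_∞ ≤ 1/C and k = e², then h(x − Δ/k) − h(x) ≤ −(1/k)·res_x(Δ). -/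
/-!
A `C`-quasi-self-concordant function has `f'''` bounded by `C f''`, so `f''` can grow at most
like `exp (C |w - u|)` (a Gronwall argument). The damped step moves every coordinate of
`Ax - b` by at most `‖AΔ‖_∞ / e² ≤ 1 / C`, so along it `f'' ≤ e f''(u)`, and the second-order
Taylor bound becomes `f (u + s) ≤ f u + f' u s + e f'' u s² / 2`; with `s = -v / e²` the
quadratic term `f'' u v² / (2 e³)` is at most `e⁻¹ f'' u v² / e²`. Summing over the rows of `A`
gives the claim.
-/

open Matrix Real Set

theorem le_exp_mul_of_deriv_le {g g' : ℝ → ℝ} {C : ℝ} (hg : ∀ t, HasDerivAt g (g' t) t)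
    (hbound : ∀ t, g' t ≤ C * g t) {u w : ℝ} (huw : u ≤ w) :
    g w ≤ exp (C * (w - u)) * g u := by
  have hanti : Antitone fun t => g t * exp (-(C * t)) := by
    have hderiv : ∀ t, HasDerivAt (fun t => g t * exp (-(C * t)))
        ((g' t - C * g t) * exp (-(C * t))) t := fun t => by
      have hexp : HasDerivAt (fun t => exp (-(C * t))) (exp (-(C * t)) * -C) t :=
        ((hasDerivAt_id t).const_mul C).neg.exp.congr_deriv (by simp)
      exact ((hg t).mul hexp).congr_deriv (by ring)
    refine antitone_of_hasDerivAt_nonpos hderiv fun t => ?_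
    exact mul_nonpos_of_nonpos_of_nonneg (by linarith [hbound t]) (exp_pos _).le
  calc g w = g w * exp (-(C * w)) * exp (C * w) := by rw [mul_assoc, ← exp_add]; simp
    _ ≤ g u * exp (-(C * u)) * exp (C * w) := mul_le_mul_of_nonneg_right (hanti huw) (exp_pos _).le
    _ = exp (C * (w - u)) * g u := by rw [mul_assoc, ← exp_add]; ring_nf

theorem le_exp_mul_abs_sub_mul_of_abs_deriv_le {g g' : ℝ → ℝ} {C : ℝ}
    (hg : ∀ t, HasDerivAt g (g' t) t) (hbound : ∀ t, |g' t| ≤ C * g t) (u w : ℝ) :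
    g w ≤ exp (C * |w - u|) * g u := by
  rcases le_total u w with huw | hwu
  · rw [abs_of_nonneg (sub_nonneg.2 huw)]
    exact le_exp_mul_of_deriv_le hg (fun t => (le_abs_self _).trans (hbound t)) huw
  · have hneg : ∀ t, HasDerivAt (fun t => g (-t)) (-g' (-t)) t := fun t =>
      ((hg (-t)).comp t (hasDerivAt_neg t)).congr_deriv (by ring)
    have := le_exp_mul_of_deriv_le hneg (fun t => (neg_le_abs _).trans (hbound (-t)))
      (neg_le_neg hwu)
    rw [abs_of_nonpos (sub_nonpos.2 hwu)]
    simpa [neg_add_eq_sub] using this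

theorem sub_sub_deriv_mul_le_of_iteratedDeriv_two_le {f : ℝ → ℝ} (hf : ContDiff ℝ 2 f)
    {u s M : ℝ} (hM : ∀ y ∈ uIcc u (u + s), iteratedDeriv 2 f y ≤ M) :
    f (u + s) - f u - deriv f u * s ≤ M * s ^ 2 / 2 := by
  rcases eq_or_ne s 0 with rfl | hs
  · simp
  have hne : u ≠ u + s := by simpa using hs
  obtain ⟨y, hy, hTaylor⟩ := taylor_mean_remainder_lagrange_iteratedDeriv hne hf.contDiffOn
  have hderiv : derivWithin f (uIcc u (u + s)) u = deriv f u :=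
    (hf.differentiable (by norm_num) u).derivWithin ((uniqueDiffOn_uIcc hne) u left_mem_uIcc)
  norm_num [hderiv] at hTaylor
  nlinarith [hM y (Ioo_subset_Icc_self hy), sq_nonneg s]

section QuasiSelfConcordant

variable {f : ℝ → ℝ} {C : ℝ}

theorem iteratedDeriv_two_nonneg_of_qsc (hC : 0 < C)
    (hqsc : ∀ t : ℝ, |iteratedDeriv 3 f t| ≤ C * iteratedDeriv 2 f t) (t : ℝ) :
    0 ≤ iteratedDeriv 2 f t :=
  (mul_nonneg_iff_of_pos_left hC).1 ((abs_nonneg _).trans (hqsc t))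

theorem iteratedDeriv_two_le_exp_mul_of_qsc (hf : ContDiff ℝ 3 f)
    (hqsc : ∀ t : ℝ, |iteratedDeriv 3 f t| ≤ C * iteratedDeriv 2 f t) (u w : ℝ) :
    iteratedDeriv 2 f w ≤ exp (C * |w - u|) * iteratedDeriv 2 f u := by
  have hderiv : ∀ t, HasDerivAt (iteratedDeriv 2 f) (iteratedDeriv 3 f t) t := fun t =>
    ((hf.differentiable_iteratedDeriv 2 (by norm_num)) t).hasDerivAt.congr_deriv
      (congrFun iteratedDeriv_succ t).symm
  exact le_exp_mul_abs_sub_mul_of_abs_deriv_le hderiv hqsc u w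

theorem sub_sub_deriv_mul_le_of_qsc (hC : 0 < C) (hf : ContDiff ℝ 3 f)
    (hqsc : ∀ t : ℝ, |iteratedDeriv 3 f t| ≤ C * iteratedDeriv 2 f t) {u s : ℝ}
    (hs : C * |s| ≤ 1) :
    f (u + s) - f u - deriv f u * s ≤ exp 1 * iteratedDeriv 2 f u * s ^ 2 / 2 := by
  refine sub_sub_deriv_mul_le_of_iteratedDeriv_two_le (hf.of_le (by norm_num)) fun y hy => ?_
  have hyu : |y - u| ≤ |s| := by simpa using abs_sub_left_of_mem_uIcc hy
  calc iteratedDeriv 2 f y ≤ exp (C * |y - u|) * iteratedDeriv 2 f u :=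
        iteratedDeriv_two_le_exp_mul_of_qsc hf hqsc u y
    _ ≤ exp 1 * iteratedDeriv 2 f u := by
        gcongr
        · exact iteratedDeriv_two_nonneg_of_qsc hC hqsc u
        · nlinarith

theorem sub_le_of_damped_step_of_qsc (hC : 0 < C) (hf : ContDiff ℝ 3 f)
    (hqsc : ∀ t : ℝ, |iteratedDeriv 3 f t| ≤ C * iteratedDeriv 2 f t) {u v : ℝ}
    (hv : C * |v| ≤ 1) :
    f (u - (exp 1 ^ 2)⁻¹ * v) - f u ≤
      -((exp 1 ^ 2)⁻¹ * (deriv f u * v - (exp 1)⁻¹ * (iteratedDeriv 2 f u * v ^ 2))) := by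
  have he : 1 ≤ exp 1 := one_le_exp zero_le_one
  have hk : (exp 1 ^ 2)⁻¹ ≤ 1 := inv_le_one_of_one_le₀ (one_le_pow₀ he)
  have hs : C * |-((exp 1 ^ 2)⁻¹ * v)| ≤ 1 := by
    rw [abs_neg, abs_mul, abs_of_pos (by positivity), mul_left_comm]
    nlinarith [mul_le_mul_of_nonneg_left hv (inv_nonneg.2 (sq_nonneg (exp 1)))]
  have hTaylor := sub_sub_deriv_mul_le_of_qsc hC hf hqsc (u := u) hs
  -- `e · (e⁻²)² / 2 ≤ e⁻¹ · e⁻²` is where the size of `k = e²` enters.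
  have hquad : exp 1 * iteratedDeriv 2 f u * (-((exp 1 ^ 2)⁻¹ * v)) ^ 2 / 2 ≤
      (exp 1 ^ 2)⁻¹ * ((exp 1)⁻¹ * (iteratedDeriv 2 f u * v ^ 2)) := by
    have hD := mul_nonneg (iteratedDeriv_two_nonneg_of_qsc hC hqsc u) (sq_nonneg v)
    have he3 : 0 < (exp 1 ^ 3)⁻¹ := by positivity
    calc exp 1 * iteratedDeriv 2 f u * (-((exp 1 ^ 2)⁻¹ * v)) ^ 2 / 2
        = (exp 1 ^ 3)⁻¹ * (iteratedDeriv 2 f u * v ^ 2) / 2 := by field_simp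
      _ ≤ (exp 1 ^ 3)⁻¹ * (iteratedDeriv 2 f u * v ^ 2) := by nlinarith
      _ = _ := by field_simp
  rw [sub_eq_add_neg u]
  linarith

end QuasiSelfConcordant

theorem residual_upper_bound_general {n d : ℕ} (C : ℝ) (hC : 0 < C) (f : ℝ → ℝ)
    (hf : ContDiff ℝ 3 f)
    (hqsc : ∀ t : ℝ, |iteratedDeriv 3 f t| ≤ C * iteratedDeriv 2 f t)
    (A : Matrix (Fin n) (Fin d) ℝ) (b : Fin n → ℝ)
    (h : (Fin d → ℝ) → ℝ)
    (hh : ∀ z, h z = ∑ i, f ((A.mulVec z - b) i))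
    (x Δ : Fin d → ℝ) (hΔ : ‖A.mulVec Δ‖ ≤ 1 / C)
    (k : ℝ) (hk : k = Real.exp 1 ^ 2) :
    h (x - k⁻¹ • Δ) - h x ≤
      -(k⁻¹ * ((∑ i, deriv f ((A.mulVec x - b) i) * A.mulVec Δ i) -
        (Real.exp 1)⁻¹ * ∑ i, iteratedDeriv 2 f ((A.mulVec x - b) i) * (A.mulVec Δ i) ^ 2)) := by
  subst hk
  have hrow : ∀ i, C * |A.mulVec Δ i| ≤ 1 := fun i => by
    rw [← le_div_iff₀' hC, ← Real.norm_eq_abs]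
    exact (norm_le_pi_norm _ i).trans hΔ
  have hstep : ∀ i, (A.mulVec (x - (exp 1 ^ 2)⁻¹ • Δ) - b) i =
      (A.mulVec x - b) i - (exp 1 ^ 2)⁻¹ * A.mulVec Δ i := fun i => by
    simp only [mulVec_sub, mulVec_smul, Pi.sub_apply, Pi.smul_apply, smul_eq_mul]
    ring
  simp only [hh, hstep, ← Finset.sum_sub_distrib]
  calc _ ≤ ∑ i, -((exp 1 ^ 2)⁻¹ * (deriv f ((A.mulVec x - b) i) * A.mulVec Δ i -
          (exp 1)⁻¹ * (iteratedDeriv 2 f ((A.mulVec x - b) i) * A.mulVec Δ i ^ 2))) :=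
        Finset.sum_le_sum fun i _ => sub_le_of_damped_step_of_qsc hC hf hqsc (hrow i)
    _ = _ := by
        simp only [Finset.sum_neg_distrib, ← Finset.mul_sum, Finset.sum_sub_distrib]

/-- Upper Taylor bound for the damped step: for `h x = ∑ i, f ((Ax - b)ᵢ)` with
`f` C-QSC, `‖AΔ‖_∞ ≤ 1/C` and `k = e²`, we have
`h (x - Δ/k) - h x ≤ -(1/k) res_x(Δ)` where
`res_x(Δ) = ∇f(x)ᵀ(AΔ) - (1/e) (AΔ)ᵀ ∇²f(x) (AΔ)`. -/
theorem residual_upper_bound {n d : ℕ} (C : ℝ) (hC : 0 < C) (f : ℝ → ℝ)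
    (hf : ContDiff ℝ 3 f) (hconv : ConvexOn ℝ Set.univ f)
    (hqsc : ∀ t : ℝ, |iteratedDeriv 3 f t| ≤ C * iteratedDeriv 2 f t)
    (A : Matrix (Fin n) (Fin d) ℝ) (b : Fin n → ℝ)
    (h : (Fin d → ℝ) → ℝ)
    (hh : ∀ z, h z = ∑ i, f ((A.mulVec z - b) i))
    (x Δ : Fin d → ℝ) (hΔ : ‖A.mulVec Δ‖ ≤ 1 / C)
    (k : ℝ) (hk : k = Real.exp 1 ^ 2) :
    h (x - k⁻¹ • Δ) - h x ≤
      -(k⁻¹ * ((∑ i, deriv f ((A.mulVec x - b) i) * A.mulVec Δ i) -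
        (Real.exp 1)⁻¹ * ∑ i, iteratedDeriv 2 f ((A.mulVec x - b) i) * (A.mulVec Δ i) ^ 2)) :=
  residual_upper_bound_general C hC f hf hqsc A b h hh x Δ hΔ k hk
end

section
/- Let α₁, …, α_k be reals with √αₜ ∈ [(1+ε)^{1/2}, d^{1/3}] for all t, and Σₜ √αₜ ≥ s. Then ∏ₜ αₜ ≥ min{ (1+ε)^{s/(1+ε)^{1/2}}, d^{(2/3)·s/d^{1/3}} }. -/
/-!
Write `βₜ = √αₜ ∈ [L, U]` and `m = min (log L / L) (log U / U)`. Since `x ↦ log x - m x` is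
concave and nonnegative at both endpoints, `log βₜ ≥ m βₜ` on the whole interval, i.e.
`βₜ ≥ exp (m βₜ)`. Multiplying, `∏ αₜ = (∏ βₜ)² ≥ exp (2 m ∑ βₜ) ≥ exp (2 m s)`, and
`exp (2 m s)` is one of the two terms of the minimum.
-/

open Real Set

theorem min_log_div_mul_le_log {L U b : ℝ} (hL : 0 < L) (hb : b ∈ Icc L U) :
    min (log L / L) (log U / U) * b ≤ log b := by
  set m := min (log L / L) (log U / U)
  have hU : 0 < U := hL.trans_le (hb.1.trans hb.2)
  have hconc : ConcaveOn ℝ (Ioi 0) (fun x => log x - m * x) :=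
    strictConcaveOn_log_Ioi.concaveOn.sub ((LinearMap.mulLeft ℝ m).convexOn (convex_Ioi 0))
  have hmL : m * L ≤ log L := (le_div_iff₀ hL).1 (min_le_left _ _)
  have hmU : m * U ≤ log U := (le_div_iff₀ hU).1 (min_le_right _ _)
  have hends := le_min (sub_nonneg.2 hmL) (sub_nonneg.2 hmU)
  have hb := hconc.min_le_of_mem_Icc hL hU hb
  linarith

theorem exp_min_log_div_mul_le {L U b : ℝ} (hL : 0 < L) (hb : b ∈ Icc L U) :
    exp (min (log L / L) (log U / U) * b) ≤ b :=
  (le_log_iff_exp_le (hL.trans_le hb.1)).1 (min_log_div_mul_le_log hL hb)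

theorem exp_min_log_div_mul_sum_le_prod {ι : Type*} (s : Finset ι) {β : ι → ℝ} {L U : ℝ}
    (hL : 0 < L) (hβ : ∀ t ∈ s, β t ∈ Icc L U) :
    exp (min (log L / L) (log U / U) * ∑ t ∈ s, β t) ≤ ∏ t ∈ s, β t := by
  rw [Finset.mul_sum, exp_sum]
  exact Finset.prod_le_prod (fun _ _ => (exp_pos _).le)
    fun t ht => exp_min_log_div_mul_le hL (hβ t ht)

theorem pow_rpow_div_eq_exp {y : ℝ} (hy : 0 < y) (n : ℕ) (c : ℝ) :
    (y ^ n) ^ (c / y) = exp (n * c * (log y / y)) := by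
  rw [rpow_def_of_pos (by positivity), log_pow]
  congr 1
  ring

theorem min_exp_mul_le_exp_mul_min (a b c : ℝ) :
    min (exp (c * a)) (exp (c * b)) ≤ exp (c * min a b) := by
  rcases min_choice a b with h | h <;> rw [h]
  exacts [min_le_left _ _, min_le_right _ _]

/-- Product lower bound (Lemma A.1 of Ene–Vladu): if `√αₜ ∈ [(1+ε)^{1/2}, d^{1/3}]`
for all `t` and `∑ₜ √αₜ ≥ s`, then
`∏ₜ αₜ ≥ min{(1+ε)^{s/(1+ε)^{1/2}}, d^{(2/3)s/d^{1/3}}}`. -/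
theorem product_lower_bound (k d : ℕ) (ε s : ℝ) (hε : 0 < ε) (α : Fin k → ℝ)
    (hl : ∀ t, Real.sqrt (1 + ε) ≤ Real.sqrt (α t))
    (hu : ∀ t, Real.sqrt (α t) ≤ (d : ℝ) ^ ((1 : ℝ) / 3))
    (hs : s ≤ ∑ t, Real.sqrt (α t)) :
    min ((1 + ε) ^ (s / Real.sqrt (1 + ε)))
        ((d : ℝ) ^ ((2 / 3) * s / (d : ℝ) ^ ((1 : ℝ) / 3))) ≤ ∏ t, α t := by
  rcases isEmpty_or_nonempty (Fin k) with hk | ⟨⟨t₀⟩⟩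
  · simp only [Finset.univ_eq_empty, Finset.sum_empty, Finset.prod_empty] at hs ⊢
    exact min_le_of_left_le <| rpow_le_one_of_one_le_of_nonpos (by linarith)
      (div_nonpos_of_nonpos_of_nonneg hs (sqrt_nonneg _))
  have hεL : 1 + ε = √(1 + ε) ^ 2 := (sq_sqrt (by linarith)).symm
  have hdU : (d : ℝ) = ((d : ℝ) ^ ((1 : ℝ) / 3)) ^ 3 := by
    rw [← rpow_natCast, ← rpow_mul (Nat.cast_nonneg d)]; norm_num
  set L := √(1 + ε)
  set U := (d : ℝ) ^ ((1 : ℝ) / 3)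
  set m := min (log L / L) (log U / U)
  have hL : 1 < L := lt_sqrt_of_sq_lt (by linarith)
  have hU : 1 < U := hL.trans_le ((hl t₀).trans (hu t₀))
  have hm : 0 ≤ m := le_min (div_nonneg (log_nonneg hL.le) (by linarith))
    (div_nonneg (log_nonneg hU.le) (by linarith))
  have hα : ∀ t, α t = √(α t) ^ 2 := fun t =>
    (sq_sqrt (sqrt_pos.1 ((zero_lt_one.trans hL).trans_le (hl t))).le).symm
  calc _ = min (exp (2 * s * (log L / L))) (exp (2 * s * (log U / U))) := by
        rw [hεL, hdU, pow_rpow_div_eq_exp (by positivity), pow_rpow_div_eq_exp (by positivity)]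
        ring_nf
    _ ≤ exp (2 * s * m) := min_exp_mul_le_exp_mul_min _ _ _
    _ ≤ exp (m * ∑ t, √(α t)) ^ 2 := by
        rw [← exp_nat_mul, exp_le_exp, Nat.cast_ofNat]
        nlinarith
    _ ≤ (∏ t, √(α t)) ^ 2 := by
        gcongr
        exact exp_min_log_div_mul_sum_le_prod _ (zero_lt_one.trans hL) fun t _ => ⟨hl t, hu t⟩
    _ = ∏ t, α t := by rw [← Finset.prod_pow, ← Finset.prod_congr rfl fun t _ => hα t]
end

section
/- In the residual solver, suppose ‖r^(t)‖₁ ≤ 2(‖w‖₁ + d) and Δ^(t) minimizes ⟨p^(t), (AΔ)²⟩ over {Δ : gᵀΔ = −1}, where p^(t) = 2(‖w‖₁+d)·s + (MC²/2)·r^(t) with s ≥ 0, M, C > 0. Then ⟨s, (AΔ^(t))²⟩ ≤ min over Δ with gᵀΔ = −1 of ( ⟨s, (AΔ)²⟩ + (MC²/2)·‖AΔ‖_∞² ). -/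
open Matrix

/-- Guarantee for the regularized least squares step of the residual solver:
if `Δᵗ` minimizes `⟨p, (AΔ)²⟩` with `p = 2(‖w‖₁ + d)s + (MC²/2)r` and
`‖r‖₁ ≤ 2(‖w‖₁ + d)`, then
`⟨s, (AΔᵗ)²⟩ ≤ min_{gᵀΔ = -1} (⟨s, (AΔ)²⟩ + (MC²/2)‖AΔ‖_∞²)`. -/
theorem residual_quadratic_guarantee {n d : ℕ} (A : Matrix (Fin n) (Fin d) ℝ)
    (g : Fin d → ℝ) (hg : g ≠ 0)
    (s r w : Fin n → ℝ) (hs : 0 ≤ s) (hrnn : 0 ≤ r) (hw : 0 ≤ w)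
    (M C : ℝ) (hM : 0 < M) (hC : 0 < C)
    (hr1 : ∑ i, r i ≤ 2 * ((∑ i, w i) + d))
    (p : Fin n → ℝ)
    (hp : p = fun i => 2 * ((∑ j, w j) + d) * s i + (M * C ^ 2 / 2) * r i)
    (Δt : Fin d → ℝ) (hΔfeas : g ⬝ᵥ Δt = -1)
    (hΔmin : ∀ Δ : Fin d → ℝ, g ⬝ᵥ Δ = -1 →
      ∑ i, p i * (A.mulVec Δt i) ^ 2 ≤ ∑ i, p i * (A.mulVec Δ i) ^ 2) :
    ∑ i, s i * (A.mulVec Δt i) ^ 2 ≤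
      sInf {v : ℝ | ∃ Δ : Fin d → ℝ, g ⬝ᵥ Δ = -1 ∧
        v = (∑ i, s i * (A.mulVec Δ i) ^ 2) + (M * C ^ 2 / 2) * ‖A.mulVec Δ‖ ^ 2} := by
  set K : ℝ := 2 * ((∑ i, w i) + d) with hK
  set c : ℝ := M * C ^ 2 / 2 with hc
  have hc0 : 0 < c := by positivity
  -- d ≥ 1 since g ≠ 0
  have hd : 0 < d := by
    rcases Nat.eq_zero_or_pos d with h | h
    · subst h; exact absurd (funext fun i => absurd i.2 (by simp)) hg
    · exact h
  have hwsum : 0 ≤ ∑ i, w i := Finset.sum_nonneg fun i _ => hw i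
  have hK0 : 0 < K := by
    have : (1 : ℝ) ≤ (d : ℝ) := by exact_mod_cast hd
    nlinarith
  apply le_csInf
  · -- nonempty
    obtain ⟨j, hj⟩ : ∃ j, g j ≠ 0 := by
      by_contra h
      push_neg at h
      exact hg (funext h)
    refine ⟨_, fun k => if k = j then -(g j)⁻¹ else 0, ?_, rfl⟩
    simp only [dotProduct, mul_ite, mul_zero, Finset.sum_ite_eq', Finset.mem_univ, if_true]
    field_simp
  · rintro v ⟨Δ, hfeas, rfl⟩
    have key : ∀ x : Fin d → ℝ, ∑ i, p i * (A.mulVec x i) ^ 2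
        = K * (∑ i, s i * (A.mulVec x i) ^ 2) + c * ∑ i, r i * (A.mulVec x i) ^ 2 := by
      intro x
      rw [hp, Finset.mul_sum, Finset.mul_sum, ← Finset.sum_add_distrib]
      exact Finset.sum_congr rfl fun i _ => by ring
    have h1 : K * (∑ i, s i * (A.mulVec Δt i) ^ 2) ≤ ∑ i, p i * (A.mulVec Δt i) ^ 2 := by
      rw [key]
      have : 0 ≤ c * ∑ i, r i * (A.mulVec Δt i) ^ 2 := by
        apply mul_nonneg hc0.le
        exact Finset.sum_nonneg fun i _ => mul_nonneg (hrnn i) (sq_nonneg _)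
      linarith
    have h2 := hΔmin Δ hfeas
    have h3 : ∑ i, r i * (A.mulVec Δ i) ^ 2 ≤ K * ‖A.mulVec Δ‖ ^ 2 := by
      calc ∑ i, r i * (A.mulVec Δ i) ^ 2
          ≤ ∑ i, r i * ‖A.mulVec Δ‖ ^ 2 := by
            apply Finset.sum_le_sum
            intro i _
            apply mul_le_mul_of_nonneg_left _ (hrnn i)
            have := norm_le_pi_norm (A.mulVec Δ) i
            calc (A.mulVec Δ i) ^ 2 = ‖A.mulVec Δ i‖ ^ 2 := by
                  rw [Real.norm_eq_abs, sq_abs]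
              _ ≤ ‖A.mulVec Δ‖ ^ 2 := by
                  apply pow_le_pow_left₀ (norm_nonneg _) this
        _ = (∑ i, r i) * ‖A.mulVec Δ‖ ^ 2 := by rw [← Finset.sum_mul]
        _ ≤ K * ‖A.mulVec Δ‖ ^ 2 :=
            mul_le_mul_of_nonneg_right hr1 (sq_nonneg _)
    have h4 : K * (∑ i, s i * (A.mulVec Δt i) ^ 2)
        ≤ K * ((∑ i, s i * (A.mulVec Δ i) ^ 2) + c * ‖A.mulVec Δ‖ ^ 2) := by
      calc K * (∑ i, s i * (A.mulVec Δt i) ^ 2)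
          ≤ ∑ i, p i * (A.mulVec Δ i) ^ 2 := h1.trans h2
        _ = K * (∑ i, s i * (A.mulVec Δ i) ^ 2) + c * ∑ i, r i * (A.mulVec Δ i) ^ 2 := key Δ
        _ ≤ K * (∑ i, s i * (A.mulVec Δ i) ^ 2) + c * (K * ‖A.mulVec Δ‖ ^ 2) := by
            have := mul_le_mul_of_nonneg_left h3 hc0.le
            linarith
        _ = K * ((∑ i, s i * (A.mulVec Δ i) ^ 2) + c * ‖A.mulVec Δ‖ ^ 2) := by ring
    exact le_of_mul_le_mul_left h4 hK0
end

section
/- Let OPT = max_{‖AΔ‖_∞ ≤ 1/C} res_x(Δ) where res_x(Δ) = ∇f(x)ᵀ(AΔ) − (1/e)(AΔ)ᵀ∇²f(x)(AΔ), and assume OPT ∈ (M/2, M] and (AΔ*)ᵀ∇²f(x)(AΔ*) ≤ eM for the maximizer Δ*. Suppose Δ satisfies ∇f(x)ᵀ(AΔ) = M, ‖AΔ‖_∞ ≤ 11/C, and ⟨s, (AΔ)²⟩ < 13M where sᵢ = f''((Ax)ᵢ). Then Δ̂ = Δ/11 satisfies ‖AΔ̂‖_∞ ≤ 1/C and res_x(Δ̂)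 ≥ OPT/20. -/
open Matrix

/-- Conversion of a solution of the regularized problem into an approximate
residual maximizer: if `OPT = res_x(Δ*) ∈ (M/2, M]`, `(AΔ*)ᵀ∇²f(x)(AΔ*) ≤ eM`,
and `Δ` satisfies `∇f(x)ᵀ(AΔ) = M`, `‖AΔ‖_∞ ≤ 11/C`, `⟨s, (AΔ)²⟩ < 13M`, then
`Δ̂ = Δ/11` satisfies `‖AΔ̂‖_∞ ≤ 1/C` and `res_x(Δ̂) ≥ OPT/20`. -/
theorem residual_solution_guarantee {n d : ℕ} (C M : ℝ) (hC : 0 < C) (hM : 0 < M)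
    (A : Matrix (Fin n) (Fin d) ℝ) (x : Fin d → ℝ) (f : ℝ → ℝ)
    (s : Fin n → ℝ) (hs : s = fun i => iteratedDeriv 2 f (A.mulVec x i))
    (hsnn : ∀ i, 0 ≤ s i)
    (res : (Fin d → ℝ) → ℝ)
    (hres : ∀ Δ : Fin d → ℝ, res Δ =
      (∑ i, deriv f (A.mulVec x i) * A.mulVec Δ i) -
        (Real.exp 1)⁻¹ * ∑ i, s i * (A.mulVec Δ i) ^ 2)
    (Δstar : Fin d → ℝ) (hΔs : ‖A.mulVec Δstar‖ ≤ 1 / C)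
    (hΔsmax : ∀ Δ : Fin d → ℝ, ‖A.mulVec Δ‖ ≤ 1 / C → res Δ ≤ res Δstar)
    (hOPT1 : M / 2 < res Δstar) (hOPT2 : res Δstar ≤ M)
    (hHess : ∑ i, s i * (A.mulVec Δstar i) ^ 2 ≤ Real.exp 1 * M)
    (Δ : Fin d → ℝ)
    (h1 : ∑ i, deriv f (A.mulVec x i) * A.mulVec Δ i = M)
    (h2 : ‖A.mulVec Δ‖ ≤ 11 / C)
    (h3 : ∑ i, s i * (A.mulVec Δ i) ^ 2 < 13 * M) :
    ‖A.mulVec ((11 : ℝ)⁻¹ • Δ)‖ ≤ 1 / C ∧ res ((11 : ℝ)⁻¹ • Δ) ≥ res Δstar / 20 := by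
  have hmv : A.mulVec ((11 : ℝ)⁻¹ • Δ) = (11 : ℝ)⁻¹ • A.mulVec Δ := by
    rw [Matrix.mulVec_smul]
  constructor
  · rw [hmv, norm_smul]
    have : ‖(11 : ℝ)⁻¹‖ = (11 : ℝ)⁻¹ := by
      rw [Real.norm_eq_abs, abs_of_pos]; norm_num
    rw [this]
    calc (11 : ℝ)⁻¹ * ‖A.mulVec Δ‖ ≤ (11 : ℝ)⁻¹ * (11 / C) := by
          apply mul_le_mul_of_nonneg_left h2; norm_num
      _ = 1 / C := by field_simp
  · rw [hres]
    have hsum1 : ∑ i, deriv f (A.mulVec x i) * A.mulVec ((11 : ℝ)⁻¹ • Δ) i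
        = (11 : ℝ)⁻¹ * M := by
      rw [hmv, ← h1, Finset.mul_sum]
      congr 1; ext i; simp [Pi.smul_apply, smul_eq_mul]; ring
    have hsum2 : ∑ i, s i * (A.mulVec ((11 : ℝ)⁻¹ • Δ) i) ^ 2
        = (121 : ℝ)⁻¹ * ∑ i, s i * (A.mulVec Δ i) ^ 2 := by
      rw [hmv, Finset.mul_sum]
      congr 1; ext i; simp [Pi.smul_apply, smul_eq_mul]; ring
    rw [hsum1, hsum2]
    have he : (2.7 : ℝ) < Real.exp 1 := by
      have := Real.exp_one_gt_d9; linarith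
    have hepos : (0 : ℝ) < Real.exp 1 := Real.exp_pos 1
    have hstep : (Real.exp 1)⁻¹ * ((121 : ℝ)⁻¹ * ∑ i, s i * (A.mulVec Δ i) ^ 2)
        ≤ (2.7 : ℝ)⁻¹ * ((121 : ℝ)⁻¹ * (13 * M)) := by
      have hSnn : 0 ≤ ∑ i, s i * (A.mulVec Δ i) ^ 2 :=
        Finset.sum_nonneg fun i _ => mul_nonneg (hsnn i) (sq_nonneg _)
      have hinv : (Real.exp 1)⁻¹ ≤ (2.7 : ℝ)⁻¹ := by
        apply inv_anti₀; norm_num; linarith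
      calc (Real.exp 1)⁻¹ * ((121 : ℝ)⁻¹ * ∑ i, s i * (A.mulVec Δ i) ^ 2)
          ≤ (2.7 : ℝ)⁻¹ * ((121 : ℝ)⁻¹ * ∑ i, s i * (A.mulVec Δ i) ^ 2) := by
            apply mul_le_mul_of_nonneg_right hinv
            positivity
        _ ≤ (2.7 : ℝ)⁻¹ * ((121 : ℝ)⁻¹ * (13 * M)) := by
            apply mul_le_mul_of_nonneg_left _ (by norm_num)
            apply mul_le_mul_of_nonneg_left (le_of_lt h3) (by norm_num)
    have : res Δstar / 20 ≤ M / 20 := by linarith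
    have hnum : (2.7 : ℝ)⁻¹ * ((121 : ℝ)⁻¹ * (13 * M)) ≤ (11 : ℝ)⁻¹ * M - M / 20 := by
      nlinarith
    linarith
end

section
/- Let N ∈ ℝ^{m×d}, A ∈ ℝ^{n×d}, P positive diagonal, u ∈ ℝ^n, and let B ∈ ℝ^{d×k} be a matrix whose columns form a basis of ker(N). Assume AᵀPA restricted appropriately is invertible (A full column rank). Then B(BᵀAᵀPAB)⁺BᵀAᵀu = (AᵀPA)⁻¹( −Nᵀ(N(AᵀPA)⁻¹Nᵀ)⁺N(AᵀPA)⁻¹Aᵀu + Aᵀu ). -/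
/-!
Both sides solve the KKT system of `min ½⟪x, S x⟫ - ⟪Aᵀu, x⟫` subject to `N x = 0`: the left
side by the null-space method, the right side by the range-space method. That system has a
unique solution because `S = AᵀPA` is positive definite. Of the pseudoinverses only the
Penrose condition `M G M = M` is needed: for `M = C Q Cᵀ` with `Q` positive definite it forces
`M G C = C`.
-/

open Matrix

open Classical in
/-- The Moore–Penrose pseudoinverse of a real matrix, defined via the four
Penrose conditions (it always exists and is unique for real matrices). -/
noncomputable def moorePenrose {a b : ℕ} (M : Matrix (Fin a) (Fin b) ℝ) :
    Matrix (Fin b) (Fin a) ℝ :=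
  if h : ∃ X : Matrix (Fin b) (Fin a) ℝ,
      M * X * M = M ∧ X * M * X = X ∧ (M * X)ᵀ = M * X ∧ (X * M)ᵀ = X * M
  then h.choose else 0

variable {ι κ μ : Type*} [Fintype ι]

/-- The witness is `f(M)` with `f x = x⁻¹` (and `f 0 = 0`), via the functional calculus. -/
theorem Matrix.IsHermitian.exists_penrose [DecidableEq ι] {M : Matrix ι ι ℝ}
    (hM : M.IsHermitian) :
    ∃ X : Matrix ι ι ℝ,
      M * X * M = M ∧ X * M * X = X ∧ (M * X)ᵀ = M * X ∧ (X * M)ᵀ = X * M := by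
  have hcont (f : ℝ → ℝ) : ContinuousOn f (spectrum ℝ M) := finite_real_spectrum.continuousOn f
  have hmul (f g : ℝ → ℝ) : cfc f M * cfc g M = cfc (fun x => f x * g x) M :=
    (cfc_mul f g M (hcont f) (hcont g)).symm
  have hsymm (f : ℝ → ℝ) : (cfc f M)ᵀ = cfc f M := by
    rw [← conjTranspose_eq_transpose_of_trivial]
    exact cfc_predicate f M
  have inv_mul_inv (x : ℝ) : x⁻¹ * x * x⁻¹ = x⁻¹ := by simpa using mul_inv_mul_cancel x⁻¹
  rw [← cfc_id' ℝ M hM.isSelfAdjoint]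
  refine ⟨cfc (·⁻¹ : ℝ → ℝ) M, ?_, ?_, ?_, ?_⟩ <;>
    simp only [hmul, hsymm, mul_inv_mul_cancel, inv_mul_inv]

theorem mul_moorePenrose_mul_self {a : ℕ} {M : Matrix (Fin a) (Fin a) ℝ}
    (hM : M.IsHermitian) : M * moorePenrose M * M = M := by
  have h := hM.exists_penrose
  rw [moorePenrose, dif_pos h]
  exact h.choose_spec.1

theorem Matrix.PosDef.eq_zero_of_transpose_mul_mul_eq_zero [Fintype κ] {Q : Matrix ι ι ℝ}
    (hQ : Q.PosDef) {X : Matrix ι κ ℝ} (h : Xᵀ * Q * X = 0) : X = 0 := by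
  classical
  refine ext_of_mulVec_single fun j => ?_
  rw [zero_mulVec]
  by_contra hx
  have hpos := hQ.dotProduct_mulVec_pos hx
  rw [star_trivial, dotProduct_comm, ← dotProduct_transpose_mulVec, mulVec_mulVec, mulVec_mulVec,
    h, zero_mulVec, dotProduct_zero] at hpos
  exact hpos.false

theorem Matrix.PosDef.mul_mul_transpose_mul_mul_eq_self [Fintype κ] {Q : Matrix ι ι ℝ}
    (hQ : Q.PosDef) {C : Matrix κ ι ℝ} {G : Matrix κ κ ℝ}
    (hG : C * Q * Cᵀ * G * (C * Q * Cᵀ) = C * Q * Cᵀ) :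
    C * Q * Cᵀ * G * C = C := by
  classical
  set M := C * Q * Cᵀ
  have hquad : (Cᵀ * (1 - M * G)ᵀ)ᵀ * Q * (Cᵀ * (1 - M * G)ᵀ) = 0 := by
    calc (Cᵀ * (1 - M * G)ᵀ)ᵀ * Q * (Cᵀ * (1 - M * G)ᵀ) = (1 - M * G) * M * (1 - M * G)ᵀ := by
          rw [transpose_mul, transpose_transpose, transpose_transpose]
          simp only [M, Matrix.mul_assoc]
      _ = 0 := by rw [Matrix.sub_mul, Matrix.one_mul, hG, sub_self, Matrix.zero_mul]
  have hzero : (1 - M * G) * C = 0 := by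
    rw [← transpose_eq_zero, transpose_mul]
    exact hQ.eq_zero_of_transpose_mul_mul_eq_zero hquad
  rwa [Matrix.sub_mul, Matrix.one_mul, sub_eq_zero, eq_comm] at hzero

/-- The KKT conditions of `min ½⟪x, S x⟫ - ⟪v, x⟫` subject to `N x = 0`, with the multiplier
eliminated by a matrix `B` whose columns span `ker N`. -/
def IsReducedKKT (S : Matrix ι ι ℝ) (N : Matrix μ ι ℝ) (B : Matrix ι κ ℝ) (v x : ι → ℝ) :
    Prop :=
  N *ᵥ x = 0 ∧ Bᵀ *ᵥ (S *ᵥ x) = Bᵀ *ᵥ v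

section ReducedKKT

variable {S : Matrix ι ι ℝ} {N : Matrix μ ι ℝ} {B : Matrix ι κ ℝ} {v : ι → ℝ}

theorem Matrix.mul_eq_zero_of_range_le_ker [Fintype κ]
    (hB : LinearMap.range B.mulVecLin ≤ LinearMap.ker N.mulVecLin) : N * B = 0 := by
  classical
  refine ext_of_mulVec_single fun j => ?_
  rw [← mulVec_mulVec, zero_mulVec]
  exact hB (LinearMap.mem_range_self B.mulVecLin _)

theorem IsReducedKKT.unique [Fintype κ] (hS : S.PosDef)
    (hB : LinearMap.ker N.mulVecLin ≤ LinearMap.range B.mulVecLin) {x y : ι → ℝ}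
    (hx : IsReducedKKT S N B v x) (hy : IsReducedKKT S N B v y) : x = y := by
  obtain ⟨w, hw⟩ : x - y ∈ LinearMap.range B.mulVecLin :=
    hB (by simp [mulVec_sub, hx.1, hy.1])
  have hBS : Bᵀ *ᵥ (S *ᵥ (x - y)) = 0 := by simp [mulVec_sub, hx.2, hy.2]
  have hquad : star (x - y) ⬝ᵥ (S *ᵥ (x - y)) = 0 := by
    rw [star_trivial]
    nth_rw 1 [← hw]
    rw [mulVecLin_apply, dotProduct_comm, ← dotProduct_transpose_mulVec, hBS, dotProduct_zero]
  by_contra hne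
  exact (hS.dotProduct_mulVec_pos (sub_ne_zero.mpr hne)).ne' hquad

theorem isReducedKKT_nullSpace [Fintype κ] (hS : S.PosDef)
    (hB : LinearMap.range B.mulVecLin ≤ LinearMap.ker N.mulVecLin) {G : Matrix κ κ ℝ}
    (hG : Bᵀ * S * B * G * (Bᵀ * S * B) = Bᵀ * S * B) :
    IsReducedKKT S N B v (B *ᵥ (G *ᵥ (Bᵀ *ᵥ v))) := by
  have hBG : Bᵀ * S * B * G * Bᵀ = Bᵀ := by
    simpa using hS.mul_mul_transpose_mul_mul_eq_self (C := Bᵀ) (by simpa using hG)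
  constructor
  · rw [mulVec_mulVec, mul_eq_zero_of_range_le_ker hB, zero_mulVec]
  · simp only [mulVec_mulVec, ← Matrix.mul_assoc, hBG]

theorem isReducedKKT_rangeSpace [Fintype κ] [Fintype μ] [DecidableEq ι] (hS : S.PosDef)
    (hB : LinearMap.range B.mulVecLin ≤ LinearMap.ker N.mulVecLin) {G : Matrix μ μ ℝ}
    (hG : N * S⁻¹ * Nᵀ * G * (N * S⁻¹ * Nᵀ) = N * S⁻¹ * Nᵀ) :
    IsReducedKKT S N B v (S⁻¹ *ᵥ (-(Nᵀ *ᵥ (G *ᵥ (N *ᵥ (S⁻¹ *ᵥ v)))) + v)) := by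
  have hNG : N * S⁻¹ * Nᵀ * G * N = N := hS.inv.mul_mul_transpose_mul_mul_eq_self hG
  have hBN : Bᵀ * Nᵀ = 0 := by
    rw [← transpose_mul, mul_eq_zero_of_range_le_ker hB, transpose_zero]
  constructor
  · simp only [mulVec_add, mulVec_neg, mulVec_mulVec, ← Matrix.mul_assoc, hNG, neg_add_cancel]
  · rw [mulVec_mulVec _ S, mul_nonsing_inv _ ((isUnit_iff_isUnit_det S).mp hS.isUnit), one_mulVec,
      mulVec_add, mulVec_neg, mulVec_mulVec, hBN, zero_mulVec, neg_zero, zero_add]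

end ReducedKKT

theorem constrained_least_squares_identity_general {n d m k : ℕ}
    (A : Matrix (Fin n) (Fin d) ℝ) (hA : Function.Injective A.mulVec)
    (N : Matrix (Fin m) (Fin d) ℝ)
    (p : Fin n → ℝ) (hp : ∀ i, 0 < p i)
    (u : Fin n → ℝ)
    (B : Matrix (Fin d) (Fin k) ℝ)
    (hBspan : LinearMap.range B.mulVecLin = LinearMap.ker N.mulVecLin)
    (S : Matrix (Fin d) (Fin d) ℝ) (hS : S = Aᵀ * Matrix.diagonal p * A) :
    B.mulVec ((moorePenrose (Bᵀ * S * B)).mulVec (Bᵀ.mulVec (Aᵀ.mulVec u))) =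
      S⁻¹.mulVec
        (-(Nᵀ.mulVec ((moorePenrose (N * S⁻¹ * Nᵀ)).mulVec
            (N.mulVec (S⁻¹.mulVec (Aᵀ.mulVec u)))))
          + Aᵀ.mulVec u) := by
  have hSpd : S.PosDef := by
    simpa [hS, conjTranspose_eq_transpose_of_trivial] using
      (PosDef.diagonal hp).conjTranspose_mul_mul_same hA
  have hBSB : (Bᵀ * S * B).IsHermitian := by
    simpa [conjTranspose_eq_transpose_of_trivial] using isHermitian_conjTranspose_mul_mul B hSpd.1
  have hNSN : (N * S⁻¹ * Nᵀ).IsHermitian := by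
    simpa [conjTranspose_eq_transpose_of_trivial] using
      isHermitian_mul_mul_conjTranspose N hSpd.inv.1
  exact (isReducedKKT_nullSpace hSpd hBspan.le (mul_moorePenrose_mul_self hBSB)).unique hSpd
    hBspan.ge (isReducedKKT_rangeSpace hSpd hBspan.le (mul_moorePenrose_mul_self hNSN))

/-- Solving the affine-constrained weighted least squares step without explicit
access to a kernel basis `B` of `N`:
`B (BᵀAᵀPAB)⁺ Bᵀ Aᵀ u = (AᵀPA)⁻¹ (-Nᵀ (N (AᵀPA)⁻¹ Nᵀ)⁺ N (AᵀPA)⁻¹ Aᵀ u + Aᵀ u)`. -/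
theorem constrained_least_squares_identity {n d m k : ℕ}
    (A : Matrix (Fin n) (Fin d) ℝ) (hA : Function.Injective A.mulVec)
    (N : Matrix (Fin m) (Fin d) ℝ)
    (p : Fin n → ℝ) (hp : ∀ i, 0 < p i)
    (u : Fin n → ℝ)
    (B : Matrix (Fin d) (Fin k) ℝ)
    (hBind : LinearIndependent ℝ fun j : Fin k => Bᵀ j)
    (hBspan : LinearMap.range B.mulVecLin = LinearMap.ker N.mulVecLin)
    (S : Matrix (Fin d) (Fin d) ℝ) (hS : S = Aᵀ * Matrix.diagonal p * A) :
    B.mulVec ((moorePenrose (Bᵀ * S * B)).mulVec (Bᵀ.mulVec (Aᵀ.mulVec u))) =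
      S⁻¹.mulVec
        (-(Nᵀ.mulVec ((moorePenrose (N * S⁻¹ * Nᵀ)).mulVec
            (N.mulVec (S⁻¹.mulVec (Aᵀ.mulVec u)))))
          + Aᵀ.mulVec u) :=
  constrained_least_squares_identity_general A hA N p hp u B hBspan S hS
end
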